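/- arXiv:2207.01034 — 4 statements merged into one kernel-verified Lean document; each statement's English description precedes it below -/
import Mathlib

section
/- Let R be a valuation domain, n ≥ 1, let ≺ be a monomial order on R[X_1,…,X_n], and let f_1,…,f_p ∈ R[X_1,…,X_n] be not all zero. For any nonzero h ∈ ⟨f_1,…,f_p⟩ there exist q ∈ ℕ and g_1,…,g_t ∈ S_≺^q(f_1,…,f_p) such that LT_≺(h) ∈ ⟨LT_≺(g_1),…,LT_≺(g_t)⟩. In other words, LT_≺(⟨f_1,…,f_p⟩) equals the ideal generated by the leading terms of the nonzero elements of S_≺^∞(f_1,…,f_p). -/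
open MvPolynomial

/-- `e` is the leading exponent (multidegree) of `f` w.r.t. the monomial order `m`. -/
def MIsLeadOf {R : Type*} [CommRing R] {n : ℕ} (m : MonomialOrder (Fin n))
    (f : MvPolynomial (Fin n) R) (e : Fin n →₀ ℕ) : Prop :=
  e ∈ f.support ∧ ∀ d ∈ f.support, d ≠ e → m.toSyn d < m.toSyn e

/-- `s` is the S-polynomial `S_≺(f, g)` w.r.t. the monomial order `m` (over a valuation
domain one of the two leading coefficients divides the other; the quotient is witnessed
by `c`). By convention `S_≺(0, h) = S_≺(h, 0) = 0`. -/
def MIsSPoly {R : Type*} [CommRing R] {n : ℕ} (m : MonomialOrder (Fin n))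
    (f g s : MvPolynomial (Fin n) R) : Prop :=
  (f = 0 ∧ s = 0) ∨ (g = 0 ∧ s = 0) ∨
  ∃ ef eg, MIsLeadOf m f ef ∧ MIsLeadOf m g eg ∧
    ((∃ c : R, MvPolynomial.coeff ef f = c * MvPolynomial.coeff eg g ∧
        s = MvPolynomial.monomial (ef ⊔ eg - ef) (1 : R) * f -
            MvPolynomial.monomial (ef ⊔ eg - eg) c * g) ∨
     (¬ (MvPolynomial.coeff eg g ∣ MvPolynomial.coeff ef f) ∧
      ∃ c : R, MvPolynomial.coeff eg g = c * MvPolynomial.coeff ef f ∧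
        s = MvPolynomial.monomial (ef ⊔ eg - ef) c * f -
            MvPolynomial.monomial (ef ⊔ eg - eg) (1 : R) * g))

/-- The iterated `S_≺`-sets `S_≺^q(f_1,…,f_p)` w.r.t. the monomial order `m`. -/
def mIterSSet {R : Type*} [CommRing R] {n : ℕ} (m : MonomialOrder (Fin n))
    {p : ℕ} (f : Fin p → MvPolynomial (Fin n) R) : ℕ → Set (MvPolynomial (Fin n) R)
  | 0 => Set.range f
  | q + 1 => mIterSSet m f q ∪ {s | ∃ g ∈ mIterSSet m f q, ∃ h ∈ mIterSSet m f q, MIsSPoly m g h s}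

/-- The leading terms ideal `LT_≺(I)` of an ideal `I` of `R[X_1,…,X_n]` w.r.t. the
monomial order `m`. -/
noncomputable def mLTideal {R : Type*} [CommRing R] {n : ℕ} (m : MonomialOrder (Fin n))
    (I : Ideal (MvPolynomial (Fin n) R)) : Ideal (MvPolynomial (Fin n) R) :=
  Ideal.span {s | ∃ g ∈ I, ∃ e, MIsLeadOf m g e ∧
    s = MvPolynomial.monomial e (MvPolynomial.coeff e g)}

section Aux


variable {R : Type*} [CommRing R] {n : ℕ}



variable (m : MonomialOrder (Fin n))

/-- The leading exponent of `f`, as the sup of its support in the synonym order. -/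
noncomputable def mdeg (f : MvPolynomial (Fin n) R) : Fin n →₀ ℕ :=
  m.toSyn.symm (f.support.sup m.toSyn)

variable {m}

lemma toSyn_mdeg (f : MvPolynomial (Fin n) R) :
    m.toSyn (mdeg m f) = f.support.sup m.toSyn := by
  simp [mdeg]

lemma le_mdeg {f : MvPolynomial (Fin n) R} {d : Fin n →₀ ℕ} (hd : d ∈ f.support) :
    m.toSyn d ≤ m.toSyn (mdeg m f) := by
  rw [toSyn_mdeg]; exact Finset.le_sup hd

lemma mdeg_mem {f : MvPolynomial (Fin n) R} (hf : f ≠ 0) : mdeg m f ∈ f.support := by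
  obtain ⟨e, he, hsup⟩ := Finset.exists_mem_eq_sup f.support
    (MvPolynomial.support_nonempty.mpr hf) m.toSyn
  have : mdeg m f = e := by rw [mdeg, hsup, m.toSyn.symm_apply_apply]
  rwa [this]

lemma isLead_mdeg {f : MvPolynomial (Fin n) R} (hf : f ≠ 0) : MIsLeadOf m f (mdeg m f) :=
  ⟨mdeg_mem hf, fun d hd hne =>
    lt_of_le_of_ne (le_mdeg hd) fun hEq => hne (m.toSyn.injective hEq)⟩

lemma MIsLeadOf.ne_zero {f : MvPolynomial (Fin n) R} {e : Fin n →₀ ℕ}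
    (h : MIsLeadOf m f e) : f ≠ 0 := by
  intro h0
  have := h.1
  rw [h0] at this
  simp at this

lemma MIsLeadOf.eq_mdeg {f : MvPolynomial (Fin n) R} {e : Fin n →₀ ℕ}
    (h : MIsLeadOf m f e) : e = mdeg m f := by
  by_contra hne
  have h1 := h.2 (mdeg m f) (mdeg_mem h.ne_zero) (fun hh => hne hh.symm)
  exact absurd h1 (not_lt.mpr (le_mdeg h.1))

lemma MIsLeadOf.coeff_ne_zero {f : MvPolynomial (Fin n) R} {e : Fin n →₀ ℕ}
    (h : MIsLeadOf m f e) : coeff e f ≠ 0 := mem_support_iff.mp h.1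

lemma MIsLeadOf.le {f : MvPolynomial (Fin n) R} {e d : Fin n →₀ ℕ}
    (h : MIsLeadOf m f e) (hd : d ∈ f.support) : m.toSyn d ≤ m.toSyn e := by
  rw [h.eq_mdeg]; exact le_mdeg hd

lemma mem_support_mul {u v : MvPolynomial (Fin n) R} {e : Fin n →₀ ℕ}
    (he : e ∈ (u * v).support) :
    ∃ eu ∈ u.support, ∃ ev ∈ v.support, e = eu + ev := by
  rw [mem_support_iff, coeff_mul] at he
  obtain ⟨⟨x, y⟩, hmem, hne⟩ := Finset.exists_ne_zero_of_sum_ne_zero he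
  rw [Finset.HasAntidiagonal.mem_antidiagonal] at hmem
  exact ⟨x, mem_support_iff.mpr (left_ne_zero_of_mul hne),
    y, mem_support_iff.mpr (right_ne_zero_of_mul hne), hmem.symm⟩

section Domain

variable [IsDomain R]

lemma coeff_mul_lead {f g : MvPolynomial (Fin n) R} (hf : f ≠ 0) (hg : g ≠ 0) :
    coeff (mdeg m f + mdeg m g) (f * g) = coeff (mdeg m f) f * coeff (mdeg m g) g := by
  classical
  rw [coeff_mul]
  apply Finset.sum_eq_single_of_mem (mdeg m f, mdeg m g)
  · rw [Finset.HasAntidiagonal.mem_antidiagonal]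
  · rintro ⟨u, v⟩ hm hne
    rw [Finset.HasAntidiagonal.mem_antidiagonal] at hm
    by_contra hzero
    have hu : coeff u f ≠ 0 := left_ne_zero_of_mul hzero
    have hv : coeff v g ≠ 0 := right_ne_zero_of_mul hzero
    have hune : u ≠ mdeg m f := by
      intro hu'
      have hv' : v = mdeg m g := by
        rw [hu'] at hm; exact add_left_cancel hm
      exact hne (by rw [hu', hv'])
    have hlt : m.toSyn u < m.toSyn (mdeg m f) :=
      (isLead_mdeg hf).2 u (mem_support_iff.mpr hu) hune
    have hle : m.toSyn v ≤ m.toSyn (mdeg m g) := le_mdeg (mem_support_iff.mpr hv)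
    have := congrArg m.toSyn hm
    rw [map_add, map_add] at this
    exact absurd this (ne_of_lt (add_lt_add_of_lt_of_le hlt hle))

lemma lead_mul {f g : MvPolynomial (Fin n) R} (hf : f ≠ 0) (hg : g ≠ 0) :
    MIsLeadOf m (f * g) (mdeg m f + mdeg m g) := by
  constructor
  · rw [mem_support_iff, coeff_mul_lead hf hg]
    exact mul_ne_zero (mem_support_iff.mp (mdeg_mem hf)) (mem_support_iff.mp (mdeg_mem hg))
  · intro d hd hne
    obtain ⟨eu, hu, ev, hv, rfl⟩ := mem_support_mul hd
    refine lt_of_le_of_ne ?_ fun hEq => hne (m.toSyn.injective hEq)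
    rw [map_add, map_add]
    exact add_le_add (le_mdeg hu) (le_mdeg hv)

end Domain

lemma exists_min_dvd [IsDomain R] [ValuationRing R] {ι : Type*} (s : Finset ι) (hs : s.Nonempty)
    (v : ι → R) : ∃ i ∈ s, ∀ j ∈ s, v i ∣ v j := by
  classical
  induction hs using Finset.Nonempty.cons_induction with
  | singleton a => exact ⟨a, by simp, by simp⟩
  | cons x s' hx hs' ih =>
    obtain ⟨i, hi, hdvd⟩ := ih
    rcases ValuationRing.dvd_total (v i) (v x) with hd | hd
    · refine ⟨i, Finset.mem_cons_of_mem hi, fun j hj => ?_⟩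
      rcases Finset.mem_cons.mp hj with rfl | hj
      · exact hd
      · exact hdvd j hj
    · refine ⟨x, Finset.mem_cons_self x s', fun j hj => ?_⟩
      rcases Finset.mem_cons.mp hj with rfl | hj
      · exact dvd_rfl
      · exact dvd_trans hd (hdvd j hj)



lemma mIterSSet_mono (m : MonomialOrder (Fin n)) {p : ℕ} (f : Fin p → MvPolynomial (Fin n) R)
    {q q' : ℕ} (h : q ≤ q') : mIterSSet m f q ⊆ mIterSSet m f q' := by
  induction q' with
  | zero => rw [Nat.le_zero.mp h]
  | succ k ih =>
    rcases eq_or_lt_of_le h with rfl | hlt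
    · exact subset_rfl
    · exact (ih (Nat.lt_succ_iff.mp hlt)).trans Set.subset_union_left

lemma mIterSSet_subset_span (m : MonomialOrder (Fin n)) {p : ℕ}
    (f : Fin p → MvPolynomial (Fin n) R) (q : ℕ) {g : MvPolynomial (Fin n) R}
    (hg : g ∈ mIterSSet m f q) : g ∈ Ideal.span (Set.range f) := by
  induction q generalizing g with
  | zero => exact Ideal.subset_span hg
  | succ k ih =>
    rcases hg with hg | ⟨a, ha, b, hb, hs⟩
    · exact ih hg
    · rcases hs with ⟨-, rfl⟩ | ⟨-, rfl⟩ | ⟨ef, eg, -, -, ⟨c, -, rfl⟩ | ⟨-, c, -, rfl⟩⟩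
      · exact zero_mem _
      · exact zero_mem _
      · exact sub_mem (Ideal.mul_mem_left _ _ (ih ha)) (Ideal.mul_mem_left _ _ (ih hb))
      · exact sub_mem (Ideal.mul_mem_left _ _ (ih ha)) (Ideal.mul_mem_left _ _ (ih hb))

lemma key_lemma [IsDomain R] [ValuationRing R] (m : MonomialOrder (Fin n)) {p : ℕ}
    (f : Fin p → MvPolynomial (Fin n) R) (δ : m.syn) :
    ∀ (h : MvPolynomial (Fin n) R), h ≠ 0 →
      ∀ (q t : ℕ) (g pc : Fin t → MvPolynomial (Fin n) R),
      (∀ i, g i ∈ mIterSSet m f q) → h = ∑ i, pc i * g i →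
      (∀ i, ∀ e ∈ (pc i * g i).support, m.toSyn e ≤ δ) →
      ∃ (q' t' : ℕ) (g' : Fin t' → MvPolynomial (Fin n) R) (eg : Fin t' → (Fin n →₀ ℕ)),
        (∀ i, g' i ∈ mIterSSet m f q') ∧ (∀ i, MIsLeadOf m (g' i) (eg i)) ∧
        ∃ eh, MIsLeadOf m h eh ∧
          (monomial eh (coeff eh h)) ∈
            Ideal.span (Set.range fun i => monomial (eg i) (coeff (eg i) (g' i))) := by
  induction δ using WellFoundedLT.induction with
  | _ δ IH =>
  intro h hh q t g pc hgS hrep hbound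
  classical
  set eδ := m.toSyn.symm δ with heδ_def
  have htoSyn_eδ : m.toSyn eδ = δ := m.toSyn.apply_symm_apply δ
  set T : Finset (Fin t) := Finset.univ.filter (fun i => coeff eδ (pc i * g i) ≠ 0) with hT_def
  have hTmem : ∀ i, i ∈ T ↔ coeff eδ (pc i * g i) ≠ 0 := by
    intro i; simp [hT_def]
  have hTcoeff0 : ∀ i ∉ T, coeff eδ (pc i * g i) = 0 := fun i hi =>
    not_not.mp (fun hne => hi ((hTmem i).mpr hne))
  have hTne : ∀ i ∈ T, pc i ≠ 0 ∧ g i ≠ 0 := by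
    intro i hi
    have hcoeff := (hTmem i).mp hi
    constructor
    · rintro h0; rw [h0] at hcoeff; simp at hcoeff
    · rintro h0; rw [h0] at hcoeff; simp at hcoeff
  have hTdeg : ∀ i ∈ T, mdeg m (pc i) + mdeg m (g i) = eδ := by
    intro i hi
    have hlead := lead_mul (m := m) (hTne i hi).1 (hTne i hi).2
    have h1 : m.toSyn (mdeg m (pc i) + mdeg m (g i)) ≤ δ := hbound i _ hlead.1
    have h2 : δ ≤ m.toSyn (mdeg m (pc i) + mdeg m (g i)) := by
      have := hlead.le (mem_support_iff.mpr ((hTmem i).mp hi))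
      rwa [htoSyn_eδ] at this
    have h3 : m.toSyn (mdeg m (pc i) + mdeg m (g i)) = m.toSyn eδ := by
      rw [htoSyn_eδ]; exact le_antisymm h1 h2
    exact m.toSyn.injective h3
  have hTcoeff : ∀ i ∈ T, coeff eδ (pc i * g i)
      = coeff (mdeg m (pc i)) (pc i) * coeff (mdeg m (g i)) (g i) := by
    intro i hi
    rw [← hTdeg i hi]
    exact coeff_mul_lead (hTne i hi).1 (hTne i hi).2
  have hsum_coeff : coeff eδ h = ∑ i ∈ T, coeff eδ (pc i * g i) := by
    rw [hrep, coeff_sum]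
    exact (Finset.sum_subset (Finset.subset_univ T) (fun i _ hi => hTcoeff0 i hi)).symm
  by_cases hc : coeff eδ h ≠ 0
  · -- Case A : the top degree is attained by h
    refine ⟨q, T.card, fun k => g ((T.equivFin.symm k : { x // x ∈ T }) : Fin t),
      fun k => mdeg m (g ((T.equivFin.symm k : { x // x ∈ T }) : Fin t)), fun k => hgS _,
      fun k => isLead_mdeg (hTne _ (T.equivFin.symm k).2).2, eδ, ?_, ?_⟩
    · refine ⟨mem_support_iff.mpr hc, ?_⟩
      intro d hd hne
      have hcd : coeff d h ≠ 0 := mem_support_iff.mp hd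
      rw [hrep, coeff_sum] at hcd
      obtain ⟨i, -, hi⟩ := Finset.exists_ne_zero_of_sum_ne_zero hcd
      have hle := hbound i d (mem_support_iff.mpr hi)
      rw [← htoSyn_eδ] at hle
      exact lt_of_le_of_ne hle (fun hEq => hne (m.toSyn.injective hEq))
    · rw [hsum_coeff, map_sum]
      apply Ideal.sum_mem
      intro i hi
      rw [hTcoeff i hi, ← hTdeg i hi, ← MvPolynomial.monomial_mul]
      apply Ideal.mul_mem_left
      apply Ideal.subset_span
      refine ⟨T.equivFin ⟨i, hi⟩, ?_⟩
      simp
  · -- Case B : coeff eδ h = 0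
    push_neg at hc
    have hδpos : (0 : m.syn) < δ := by
      rcases eq_or_lt_of_le (show (0 : m.syn) ≤ δ from m.bot_eq_zero ▸ bot_le) with hEq | hlt
      · exfalso
        apply hh
        rw [← MvPolynomial.support_eq_empty, Finset.eq_empty_iff_forall_notMem]
        intro e he
        have hce : coeff e h ≠ 0 := mem_support_iff.mp he
        have hce' := hce
        rw [hrep, coeff_sum] at hce'
        obtain ⟨i, -, hi⟩ := Finset.exists_ne_zero_of_sum_ne_zero hce'
        have hle := hbound i e (mem_support_iff.mpr hi)
        rw [← hEq] at hle
        have he0 : e = eδ := by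
          have h1 : m.toSyn e = m.toSyn eδ := by
            rw [htoSyn_eδ, ← hEq]
            exact le_antisymm hle (by rw [← m.bot_eq_zero]; exact bot_le)
          exact m.toSyn.injective h1
        rw [he0] at hce
        exact hce hc
      · exact hlt
    have descent : ∀ (q₂ t₂ : ℕ) (g₂ pc₂ : Fin t₂ → MvPolynomial (Fin n) R),
        (∀ i, g₂ i ∈ mIterSSet m f q₂) → h = ∑ i, pc₂ i * g₂ i →
        (∀ i, ∀ e ∈ (pc₂ i * g₂ i).support, m.toSyn e < δ) →
        ∃ (q' t' : ℕ) (g' : Fin t' → MvPolynomial (Fin n) R) (eg : Fin t' → (Fin n →₀ ℕ)),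
          (∀ i, g' i ∈ mIterSSet m f q') ∧ (∀ i, MIsLeadOf m (g' i) (eg i)) ∧
          ∃ eh, MIsLeadOf m h eh ∧
            (monomial eh (coeff eh h)) ∈
              Ideal.span (Set.range fun i => monomial (eg i) (coeff (eg i) (g' i))) := by
      intro q₂ t₂ g₂ pc₂ hS₂ hrep₂ hstrict
      have hbot : (⊥ : m.syn) < δ := by rw [m.bot_eq_zero]; exact hδpos
      have hlt : Finset.univ.sup (fun i => (pc₂ i * g₂ i).support.sup m.toSyn) < δ := by
        rw [Finset.sup_lt_iff hbot]
        intro i _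
        rw [Finset.sup_lt_iff hbot]
        intro e he
        exact hstrict i e he
      exact IH _ hlt h hh q₂ t₂ g₂ pc₂ hS₂ hrep₂
        (fun i e he => le_trans (Finset.le_sup he)
          (Finset.le_sup (f := fun i => (pc₂ i * g₂ i).support.sup m.toSyn) (Finset.mem_univ i)))
    by_cases hTempty : T = ∅
    · apply descent q t g pc hgS hrep
      intro i e he
      refine lt_of_le_of_ne (hbound i e he) ?_
      intro heq
      have heeδ : e = eδ := m.toSyn.injective (by rw [heq, htoSyn_eδ])
      rw [heeδ] at he
      exact (mem_support_iff.mp he) (hTcoeff0 i (by rw [hTempty]; exact Finset.notMem_empty i))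
    · have hTnonempty : T.Nonempty := Finset.nonempty_iff_ne_empty.mpr hTempty
      obtain ⟨i0, hi0T, hi0dvd⟩ := exists_min_dvd T hTnonempty (fun i => coeff (mdeg m (g i)) (g i))
      have hg0 : g i0 ≠ 0 := (hTne i0 hi0T).2
      have hL0 : coeff (mdeg m (g i0)) (g i0) ≠ 0 := mem_support_iff.mp (mdeg_mem hg0)
      have hchoice : ∀ i, ∃ cc : R, i ∈ T →
          coeff (mdeg m (g i)) (g i) = cc * coeff (mdeg m (g i0)) (g i0) := by
        intro i
        by_cases hi : i ∈ T
        · obtain ⟨cc, hcc⟩ := hi0dvd i hi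
          exact ⟨cc, fun _ => by rw [hcc, mul_comm]⟩
        · exact ⟨0, fun hmem => absurd hmem hi⟩
      choose c hc_spec using hchoice
      have hterm : ∀ i ∈ T, coeff (mdeg m (pc i)) (pc i) * c i * coeff (mdeg m (g i0)) (g i0)
          = coeff eδ (pc i * g i) := by
        intro i hi
        rw [hTcoeff i hi, hc_spec i hi, mul_assoc]
      have hsum0 : (∑ i ∈ T, coeff (mdeg m (pc i)) (pc i) * c i) * coeff (mdeg m (g i0)) (g i0)
          = 0 := by
        rw [Finset.sum_mul, Finset.sum_congr rfl hterm, ← hsum_coeff, hc]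
      have hsumbc : ∑ i ∈ T, coeff (mdeg m (pc i)) (pc i) * c i = 0 := by
        rcases mul_eq_zero.mp hsum0 with h' | h'
        · exact h'
        · exact absurd h' hL0
      have hci0 : c i0 = 1 := by
        have h1 : c i0 * coeff (mdeg m (g i0)) (g i0) = 1 * coeff (mdeg m (g i0)) (g i0) := by
          rw [one_mul, ← hc_spec i0 hi0T]
        exact mul_right_cancel₀ hL0 h1
      have hsum_erase : ∑ i ∈ T.erase i0, coeff (mdeg m (pc i)) (pc i) * c i
          = - coeff (mdeg m (pc i0)) (pc i0) := by
        have h1 := Finset.sum_erase_add T (fun i => coeff (mdeg m (pc i)) (pc i) * c i) hi0T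
        rw [hsumbc, hci0, mul_one] at h1
        exact eq_neg_of_add_eq_zero_left h1
      set spoly : Fin t → MvPolynomial (Fin n) R := fun i =>
        monomial (mdeg m (g i) ⊔ mdeg m (g i0) - mdeg m (g i)) (1 : R) * g i -
        monomial (mdeg m (g i) ⊔ mdeg m (g i0) - mdeg m (g i0)) (c i) * g i0 with hspoly_def
      have hexp : ∀ i ∈ T.erase i0,
          monomial (eδ - (mdeg m (g i) ⊔ mdeg m (g i0))) (coeff (mdeg m (pc i)) (pc i)) * spoly i
            = monomial (mdeg m (pc i)) (coeff (mdeg m (pc i)) (pc i)) * g i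
              - monomial (mdeg m (pc i0)) (coeff (mdeg m (pc i)) (pc i) * c i) * g i0 := by
        intro i hi
        have hiT : i ∈ T := Finset.mem_of_mem_erase hi
        have hdle : mdeg m (g i) ≤ eδ := by
          rw [← hTdeg i hiT]; exact le_add_self
        have hd0le : mdeg m (g i0) ≤ eδ := by
          rw [← hTdeg i0 hi0T]; exact le_add_self
        have hγle : mdeg m (g i) ⊔ mdeg m (g i0) ≤ eδ := sup_le hdle hd0le
        have h1 : eδ - (mdeg m (g i) ⊔ mdeg m (g i0))
            + (mdeg m (g i) ⊔ mdeg m (g i0) - mdeg m (g i)) = mdeg m (pc i) := by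
          rw [tsub_add_tsub_cancel hγle le_sup_left, ← hTdeg i hiT, add_tsub_cancel_right]
        have h2 : eδ - (mdeg m (g i) ⊔ mdeg m (g i0))
            + (mdeg m (g i) ⊔ mdeg m (g i0) - mdeg m (g i0)) = mdeg m (pc i0) := by
          rw [tsub_add_tsub_cancel hγle le_sup_right, ← hTdeg i0 hi0T, add_tsub_cancel_right]
        rw [hspoly_def]
        dsimp only
        rw [mul_sub, ← mul_assoc, ← mul_assoc, MvPolynomial.monomial_mul,
          MvPolynomial.monomial_mul, h1, h2, mul_one]
      have hkey : ∑ i ∈ T.erase i0,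
          monomial (eδ - (mdeg m (g i) ⊔ mdeg m (g i0))) (coeff (mdeg m (pc i)) (pc i)) * spoly i
          = ∑ i ∈ T, monomial (mdeg m (pc i)) (coeff (mdeg m (pc i)) (pc i)) * g i := by
        rw [Finset.sum_congr rfl hexp, Finset.sum_sub_distrib]
        have hmono : ∑ i ∈ T.erase i0,
            monomial (mdeg m (pc i0)) (coeff (mdeg m (pc i)) (pc i) * c i) * g i0
            = monomial (mdeg m (pc i0))
                (∑ i ∈ T.erase i0, coeff (mdeg m (pc i)) (pc i) * c i) * g i0 := by
          rw [map_sum, Finset.sum_mul]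
        rw [hmono, hsum_erase, map_neg, neg_mul, sub_neg_eq_add]
        exact Finset.sum_erase_add T _ hi0T
      set G : Fin t ⊕ Fin t → MvPolynomial (Fin n) R :=
        Sum.elim g (fun i => if i ∈ T.erase i0 then spoly i else 0) with hG_def
      set Pc : Fin t ⊕ Fin t → MvPolynomial (Fin n) R :=
        Sum.elim (fun i => if i ∈ T then
            pc i - monomial (mdeg m (pc i)) (coeff (mdeg m (pc i)) (pc i)) else pc i)
          (fun i => if i ∈ T.erase i0 then
            monomial (eδ - (mdeg m (g i) ⊔ mdeg m (g i0))) (coeff (mdeg m (pc i)) (pc i))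
            else 0) with hPc_def
      have hGmem : ∀ j, G j ∈ mIterSSet m f (q + 1) := by
        intro j
        rcases j with i | i
        · exact Set.subset_union_left (hgS i)
        · rw [hG_def]; dsimp only [Sum.elim_inr]
          split_ifs with hi
          · apply Set.mem_union_right
            refine ⟨g i, hgS i, g i0, hgS i0, ?_⟩
            refine Or.inr (Or.inr ⟨mdeg m (g i), mdeg m (g i0),
              isLead_mdeg (hTne i (Finset.mem_of_mem_erase hi)).2, isLead_mdeg hg0,
              Or.inl ⟨c i, hc_spec i (Finset.mem_of_mem_erase hi), ?_⟩⟩)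
            rw [hspoly_def]
          · apply Set.mem_union_right
            refine ⟨g i0, hgS i0, g i0, hgS i0, ?_⟩
            refine Or.inr (Or.inr ⟨mdeg m (g i0), mdeg m (g i0), isLead_mdeg hg0,
              isLead_mdeg hg0, Or.inl ⟨1, (one_mul _).symm, ?_⟩⟩)
            simp
      have hrepsum : ∑ j : Fin t ⊕ Fin t, Pc j * G j = h := by
        rw [Fintype.sum_sum_type]
        have e1 : ∀ i : Fin t, Pc (Sum.inl i) * G (Sum.inl i)
            = pc i * g i - (if i ∈ T then
                monomial (mdeg m (pc i)) (coeff (mdeg m (pc i)) (pc i)) * g i else 0) := by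
          intro i
          rw [hPc_def, hG_def]
          dsimp only [Sum.elim_inl]
          split_ifs with hi
          · ring
          · ring
        have e2 : ∀ i : Fin t, Pc (Sum.inr i) * G (Sum.inr i)
            = (if i ∈ T.erase i0 then
                monomial (eδ - (mdeg m (g i) ⊔ mdeg m (g i0)))
                  (coeff (mdeg m (pc i)) (pc i)) * spoly i else 0) := by
          intro i
          rw [hPc_def, hG_def]
          dsimp only [Sum.elim_inr]
          split_ifs with hi
          · rfl
          · simp
        rw [Finset.sum_congr rfl (fun i _ => e1 i), Finset.sum_congr rfl (fun i _ => e2 i),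
          Finset.sum_sub_distrib, Finset.sum_ite_mem, Finset.sum_ite_mem,
          Finset.univ_inter, Finset.univ_inter, hkey, ← hrep]
        ring
      have hlt_ne : ∀ e : Fin n →₀ ℕ, m.toSyn e ≤ δ → e ≠ eδ → m.toSyn e < δ := by
        intro e hle hne
        refine lt_of_le_of_ne hle (fun hEq => hne (m.toSyn.injective ?_))
        rw [hEq, htoSyn_eδ]
      have hstrict : ∀ j, ∀ e ∈ (Pc j * G j).support, m.toSyn e < δ := by
        intro j e he
        rcases j with i | i
        · by_cases hi : i ∈ T
          · have hPcG : Pc (Sum.inl i) * G (Sum.inl i)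
                = (pc i - monomial (mdeg m (pc i)) (coeff (mdeg m (pc i)) (pc i))) * g i := by
              rw [hPc_def, hG_def]; dsimp only [Sum.elim_inl]; rw [if_pos hi]
            rw [hPcG] at he
            obtain ⟨eu, hu, ev, hv, rfl⟩ := mem_support_mul he
            have hu' : coeff eu (pc i
                - monomial (mdeg m (pc i)) (coeff (mdeg m (pc i)) (pc i))) ≠ 0 :=
              mem_support_iff.mp hu
            rw [coeff_sub, coeff_monomial] at hu'
            have huu : eu ∈ (pc i).support ∧ eu ≠ mdeg m (pc i) := by
              by_cases heu : mdeg m (pc i) = eu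
              · rw [if_pos heu, ← heu, sub_self] at hu'
                exact absurd rfl hu'
              · rw [if_neg heu, sub_zero] at hu'
                exact ⟨mem_support_iff.mpr hu', fun hEq => heu hEq.symm⟩
            have hlt1 : m.toSyn eu < m.toSyn (mdeg m (pc i)) :=
              (isLead_mdeg (hTne i hi).1).2 eu huu.1 huu.2
            have hfin : m.toSyn (eu + ev) < m.toSyn (mdeg m (pc i) + mdeg m (g i)) := by
              rw [map_add, map_add]
              exact add_lt_add_of_lt_of_le hlt1 (le_mdeg hv)
            rwa [hTdeg i hi, htoSyn_eδ] at hfin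
          · have hPcG : Pc (Sum.inl i) * G (Sum.inl i) = pc i * g i := by
              rw [hPc_def, hG_def]; dsimp only [Sum.elim_inl]; rw [if_neg hi]
            rw [hPcG] at he
            refine hlt_ne e (hbound i e he) fun hEq => ?_
            rw [hEq] at he
            exact (mem_support_iff.mp he) (hTcoeff0 i hi)
        · by_cases hi : i ∈ T.erase i0
          · have hiT : i ∈ T := Finset.mem_of_mem_erase hi
            have hPcG : Pc (Sum.inr i) * G (Sum.inr i)
                = monomial (mdeg m (pc i)) (coeff (mdeg m (pc i)) (pc i)) * g i
                  - monomial (mdeg m (pc i0)) (coeff (mdeg m (pc i)) (pc i) * c i) * g i0 := by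
              rw [hPc_def, hG_def]; dsimp only [Sum.elim_inr]; rw [if_pos hi, if_pos hi]
              exact hexp i hi
            rw [hPcG] at he
            have hem := Finset.mem_union.mp (MvPolynomial.support_sub _ _ _ he)
            have hle : m.toSyn e ≤ δ := by
              rcases hem with hem | hem
              · obtain ⟨eu, hu, ev, hv, rfl⟩ := mem_support_mul hem
                have heu : eu = mdeg m (pc i) := by
                  have hcu := mem_support_iff.mp hu
                  rw [coeff_monomial] at hcu
                  by_cases hx : mdeg m (pc i) = eu
                  · exact hx.symm
                  · rw [if_neg hx] at hcu; exact absurd rfl hcu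
                rw [heu, ← htoSyn_eδ, ← hTdeg i hiT, map_add, map_add]
                exact add_le_add le_rfl (le_mdeg hv)
              · obtain ⟨eu, hu, ev, hv, rfl⟩ := mem_support_mul hem
                have heu : eu = mdeg m (pc i0) := by
                  have hcu := mem_support_iff.mp hu
                  rw [coeff_monomial] at hcu
                  by_cases hx : mdeg m (pc i0) = eu
                  · exact hx.symm
                  · rw [if_neg hx] at hcu; exact absurd rfl hcu
                rw [heu, ← htoSyn_eδ, ← hTdeg i0 hi0T, map_add, map_add]
                exact add_le_add le_rfl (le_mdeg hv)
            refine hlt_ne e hle fun hEq => ?_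
            have hczero : coeff eδ
                (monomial (mdeg m (pc i)) (coeff (mdeg m (pc i)) (pc i)) * g i
                  - monomial (mdeg m (pc i0)) (coeff (mdeg m (pc i)) (pc i) * c i) * g i0)
                = 0 := by
              have c1 : coeff eδ (monomial (mdeg m (pc i)) (coeff (mdeg m (pc i)) (pc i)) * g i)
                  = coeff (mdeg m (pc i)) (pc i) * coeff (mdeg m (g i)) (g i) := by
                rw [← hTdeg i hiT, coeff_monomial_mul]
              have c2 : coeff eδ (monomial (mdeg m (pc i0))
                    (coeff (mdeg m (pc i)) (pc i) * c i) * g i0)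
                  = coeff (mdeg m (pc i)) (pc i) * c i * coeff (mdeg m (g i0)) (g i0) := by
                rw [← hTdeg i0 hi0T, coeff_monomial_mul]
              rw [coeff_sub, c1, c2, hc_spec i hiT]
              ring
            rw [hEq] at he
            exact mem_support_iff.mp he hczero
          · have hPcG : Pc (Sum.inr i) * G (Sum.inr i) = 0 := by
              rw [hPc_def]; dsimp only [Sum.elim_inr]; rw [if_neg hi, zero_mul]
            rw [hPcG] at he
            simp at he
      apply descent (q + 1) (t + t) (G ∘ finSumFinEquiv.symm) (Pc ∘ finSumFinEquiv.symm)
        (fun i => hGmem _) ?_ (fun i e he => hstrict _ e he)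
      rw [← hrepsum]
      exact (Equiv.sum_comp finSumFinEquiv.symm (fun j => Pc j * G j)).symm




end Aux

/-- For a valuation domain `R`, a monomial order `≺` on `R[X_1,…,X_n]` and `f_1,…,f_p`
not all zero: for every nonzero `h ∈ ⟨f_1,…,f_p⟩`, there are `q ∈ ℕ` and
`g_1,…,g_t ∈ S_≺^q(f_1,…,f_p)` with `LT_≺(h) ∈ ⟨LT_≺(g_1),…,LT_≺(g_t)⟩`; in other words,
`LT_≺(⟨f_1,…,f_p⟩) = ⟨LT_≺(S_≺^∞(f_1,…,f_p))⟩`. -/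
theorem stmt14 {R : Type*} [CommRing R] [IsDomain R] [ValuationRing R] {n : ℕ} (hn : 1 ≤ n)
    (m : MonomialOrder (Fin n)) {p : ℕ} (f : Fin p → MvPolynomial (Fin n) R)
    (hf : ∃ i, f i ≠ 0) :
    (∀ h ∈ Ideal.span (Set.range f), h ≠ 0 →
      ∃ (q t : ℕ) (g : Fin t → MvPolynomial (Fin n) R) (eg : Fin t → (Fin n →₀ ℕ)),
        (∀ i, g i ∈ mIterSSet m f q) ∧ (∀ i, MIsLeadOf m (g i) (eg i)) ∧
        ∃ eh, MIsLeadOf m h eh ∧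
          (MvPolynomial.monomial eh (MvPolynomial.coeff eh h)) ∈
            Ideal.span (Set.range fun i =>
              MvPolynomial.monomial (eg i) (MvPolynomial.coeff (eg i) (g i)))) ∧
    mLTideal m (Ideal.span (Set.range f)) =
      Ideal.span {s | ∃ g ∈ ⋃ q, mIterSSet m f q, ∃ e, MIsLeadOf m g e ∧
        s = MvPolynomial.monomial e (MvPolynomial.coeff e g)} := by
  classical
  have main : ∀ h ∈ Ideal.span (Set.range f), h ≠ 0 →
      ∃ (q t : ℕ) (g : Fin t → MvPolynomial (Fin n) R) (eg : Fin t → (Fin n →₀ ℕ)),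
        (∀ i, g i ∈ mIterSSet m f q) ∧ (∀ i, MIsLeadOf m (g i) (eg i)) ∧
        ∃ eh, MIsLeadOf m h eh ∧
          (MvPolynomial.monomial eh (MvPolynomial.coeff eh h)) ∈
            Ideal.span (Set.range fun i =>
              MvPolynomial.monomial (eg i) (MvPolynomial.coeff (eg i) (g i))) := by
    intro h hmem hh
    rw [Ideal.mem_span_range_iff_exists_fun] at hmem
    obtain ⟨cc, hcc⟩ := hmem
    exact key_lemma m f (Finset.univ.sup fun i => (cc i * f i).support.sup m.toSyn) h hh 0 p f cc
      (fun i => Set.mem_range_self i) hcc.symm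
      (fun i e he => le_trans (Finset.le_sup he)
        (Finset.le_sup (f := fun i => (cc i * f i).support.sup m.toSyn) (Finset.mem_univ i)))
  refine ⟨main, le_antisymm ?_ ?_⟩
  · simp only [mLTideal]
    apply Ideal.span_le.mpr
    rintro s ⟨g0, hg0I, e, hlead, rfl⟩
    obtain ⟨q, t, gg, eg, hS, hleads, eh, hehlead, hmemspan⟩ := main g0 hg0I hlead.ne_zero
    have hehe : eh = e := by rw [hehlead.eq_mdeg, hlead.eq_mdeg]
    rw [← hehe]
    have hspan_le : Ideal.span (Set.range fun i =>
        MvPolynomial.monomial (eg i) (MvPolynomial.coeff (eg i) (gg i)))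
        ≤ Ideal.span {s | ∃ g ∈ ⋃ q, mIterSSet m f q, ∃ e, MIsLeadOf m g e ∧
            s = MvPolynomial.monomial e (MvPolynomial.coeff e g)} := by
      apply Ideal.span_le.mpr
      rintro s' ⟨i, rfl⟩
      exact Ideal.subset_span ⟨gg i, Set.mem_iUnion.mpr ⟨q, hS i⟩, eg i, hleads i, rfl⟩
    exact hspan_le hmemspan
  · apply Ideal.span_le.mpr
    rintro s ⟨g0, hg0, e, hlead, rfl⟩
    obtain ⟨q, hq⟩ := Set.mem_iUnion.mp hg0
    exact Ideal.subset_span ⟨g0, mIterSSet_subset_span m f q hq, e, hlead, rfl⟩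
end

section
/- Let R be a valuation domain, n ≥ 1, and let ≺ be a monomial order on R[X_1,…,X_n]. Then for any nonzero f, g ∈ R[X_1,…,X_n] and any monomials M_1, M_2 ∈ R[X_1,…,X_n], there exists a monomial N ∈ R[X_1,…,X_n] such that S_≺(M_1·f, M_2·g) = N · S_≺(f,g); more precisely, N = lcm(M_1·LM_≺(f), M_2·LM_≺(g)) / lcm(LM_≺(f), LM_≺(g)). -/
open MvPolynomial

theorem mLead_unique {R : Type*} [CommRing R] {n : ℕ} {m : MonomialOrder (Fin n)}
    {f : MvPolynomial (Fin n) R} {e e' : Fin n →₀ ℕ}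
    (h : MIsLeadOf m f e) (h' : MIsLeadOf m f e') : e = e' := by
  by_contra hne
  exact lt_asymm (h.2 e' h'.1 (Ne.symm hne)) (h'.2 e h.1 hne)

theorem mLead_shift {R : Type*} [CommRing R] [IsDomain R] {n : ℕ} {m : MonomialOrder (Fin n)}
    {f : MvPolynomial (Fin n) R} {e : Fin n →₀ ℕ} (h : MIsLeadOf m f e) (m1 : Fin n →₀ ℕ) :
    MIsLeadOf m (MvPolynomial.monomial m1 (1 : R) * f) (m1 + e) := by
  have hmem : ∀ d : Fin n →₀ ℕ, d ∈ (MvPolynomial.monomial m1 (1 : R) * f).support ↔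
      m1 ≤ d ∧ (d - m1) ∈ f.support := by
    intro d
    simp only [MvPolynomial.mem_support_iff, MvPolynomial.coeff_monomial_mul', one_mul]
    split_ifs with hle
    · simp [hle]
    · simp [hle]
  constructor
  · rw [hmem]
    exact ⟨le_add_right le_rfl, by simpa [add_tsub_cancel_left] using h.1⟩
  · intro d hd hne
    rw [hmem] at hd
    obtain ⟨hle, hsup⟩ := hd
    have hd_eq : d = m1 + (d - m1) := by
      ext i
      have := hle i
      simp only [Finsupp.add_apply, Finsupp.tsub_apply]
      omega
    have hne' : d - m1 ≠ e := by
      intro hE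
      rw [hE] at hd_eq
      exact hne hd_eq
    have := h.2 (d - m1) hsup hne'
    calc m.toSyn d = m.toSyn m1 + m.toSyn (d - m1) := by rw [← map_add, ← hd_eq]
      _ < m.toSyn m1 + m.toSyn e := by exact add_lt_add_right this _
      _ = m.toSyn (m1 + e) := by rw [map_add]

/-- For a valuation domain `R` and a monomial order `≺` on `R[X_1,…,X_n]`: for nonzero
`f, g` and monomials `X^{m₁}, X^{m₂}`,
`S_≺(X^{m₁}·f, X^{m₂}·g) = N · S_≺(f, g)` where `N` is the monomial
`lcm(X^{m₁}·LM_≺ f, X^{m₂}·LM_≺ g) / lcm(LM_≺ f, LM_≺ g)`. -/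
theorem stmt16 {R : Type*} [CommRing R] [IsDomain R] [ValuationRing R] {n : ℕ} (hn : 1 ≤ n)
    (m : MonomialOrder (Fin n)) (f g : MvPolynomial (Fin n) R) (hf : f ≠ 0) (hg : g ≠ 0)
    (m1 m2 : Fin n →₀ ℕ) (ef eg : Fin n →₀ ℕ)
    (hef : MIsLeadOf m f ef) (heg : MIsLeadOf m g eg)
    (s s2 : MvPolynomial (Fin n) R) (hs : MIsSPoly m f g s)
    (hs2 : MIsSPoly m (MvPolynomial.monomial m1 (1 : R) * f)
      (MvPolynomial.monomial m2 (1 : R) * g) s2) :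
    s2 = MvPolynomial.monomial (((m1 + ef) ⊔ (m2 + eg)) - (ef ⊔ eg)) (1 : R) * s := by
  have hf' : MvPolynomial.monomial m1 (1 : R) * f ≠ 0 :=
    mul_ne_zero (by simp [MvPolynomial.monomial_eq_zero]) hf
  have hg' : MvPolynomial.monomial m2 (1 : R) * g ≠ 0 :=
    mul_ne_zero (by simp [MvPolynomial.monomial_eq_zero]) hg
  have hcf : MvPolynomial.coeff (m1 + ef) (MvPolynomial.monomial m1 (1 : R) * f) =
      MvPolynomial.coeff ef f := by
    rw [MvPolynomial.coeff_monomial_mul, one_mul]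
  have hcg : MvPolynomial.coeff (m2 + eg) (MvPolynomial.monomial m2 (1 : R) * g) =
      MvPolynomial.coeff eg g := by
    rw [MvPolynomial.coeff_monomial_mul, one_mul]
  have hcfne : MvPolynomial.coeff ef f ≠ 0 := MvPolynomial.mem_support_iff.mp hef.1
  have hcgne : MvPolynomial.coeff eg g ≠ 0 := MvPolynomial.mem_support_iff.mp heg.1
  have key1 : ((m1 + ef) ⊔ (m2 + eg) - (m1 + ef)) + m1 =
      ((m1 + ef) ⊔ (m2 + eg) - (ef ⊔ eg)) + (ef ⊔ eg - ef) := by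
    ext i
    simp only [Finsupp.add_apply, Finsupp.tsub_apply, Finsupp.sup_apply]
    omega
  have key2 : ((m1 + ef) ⊔ (m2 + eg) - (m2 + eg)) + m2 =
      ((m1 + ef) ⊔ (m2 + eg) - (ef ⊔ eg)) + (ef ⊔ eg - eg) := by
    ext i
    simp only [Finsupp.add_apply, Finsupp.tsub_apply, Finsupp.sup_apply]
    omega
  rcases hs with ⟨h0, _⟩ | ⟨h0, _⟩ | ⟨ef', eg', hef', heg', hcase⟩
  · exact absurd h0 hf
  · exact absurd h0 hg
  obtain rfl : ef = ef' := mLead_unique hef hef'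
  obtain rfl : eg = eg' := mLead_unique heg heg'
  rcases hs2 with ⟨h0, _⟩ | ⟨h0, _⟩ | ⟨ef2, eg2, hef2, heg2, hcase2⟩
  · exact absurd h0 hf'
  · exact absurd h0 hg'
  obtain rfl : ef2 = m1 + ef := mLead_unique hef2 (mLead_shift hef m1)
  obtain rfl : eg2 = m2 + eg := mLead_unique heg2 (mLead_shift heg m2)
  rcases hcase with ⟨c, hc, hseq⟩ | ⟨hndvd, c, hc, hseq⟩ <;>
    rcases hcase2 with ⟨c', hc', hs2eq⟩ | ⟨hndvd', c', hc', hs2eq⟩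
  · -- both first case
    rw [hcf, hcg, hc] at hc'
    have hcc : c' = c := mul_right_cancel₀ hcgne hc'.symm
    subst hcc
    rw [hs2eq, hseq, mul_sub, ← mul_assoc, ← mul_assoc, ← mul_assoc, ← mul_assoc,
      MvPolynomial.monomial_mul, MvPolynomial.monomial_mul, MvPolynomial.monomial_mul,
      MvPolynomial.monomial_mul, one_mul, mul_one, one_mul, key1, key2]
  · rw [hcf, hcg] at hndvd'
    exact absurd ⟨c, hc.trans (mul_comm c _)⟩ hndvd'
  · rw [hcf, hcg] at hc'
    exact absurd ⟨c', hc'.trans (mul_comm c' _)⟩ hndvd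
  · rw [hcf, hcg, hc] at hc'
    have hcc : c' = c := mul_right_cancel₀ hcfne hc'.symm
    subst hcc
    rw [hs2eq, hseq, mul_sub, ← mul_assoc, ← mul_assoc, ← mul_assoc, ← mul_assoc,
      MvPolynomial.monomial_mul, MvPolynomial.monomial_mul, MvPolynomial.monomial_mul,
      MvPolynomial.monomial_mul, one_mul, mul_one, one_mul, key1, key2]
end

section
/- Let R be a commutative ring and let a, b ∈ R. Then in R[X], the leading terms ideal of the ideal ⟨1 + aX, b⟩ is LT(⟨1 + aX, b⟩) = [b : a^∞][X] + ⟨aX⟩, where [b : a^∞][X] denotes the ideal of R[X] consisting of all polynomials whose coefficients all lie in [b : a^∞]. -/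
open Polynomial

/-- The leading terms ideal `LT(I)` of an ideal `I` of `R[X]`: the ideal generated by the
leading terms of the nonzero elements of `I`. -/
noncomputable def ltIdeal {R : Type*} [CommRing R] (I : Ideal (Polynomial R)) : Ideal (Polynomial R) :=
  Ideal.span {p | ∃ f ∈ I, f ≠ 0 ∧ p = Polynomial.C f.leadingCoeff * Polynomial.X ^ f.natDegree}

section Aux

variable {R : Type*} [CommRing R]

/-- Downward induction: top coefficients of `g` are killed into `⟨b⟩` by powers of `a`. -/
lemma aux_pow (a b : R) (g h : Polynomial R) (n : ℕ)
    (hcoef : ∀ i, n < i → (g * (1 + C a * X) + h * C b).coeff i = 0) :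
    ∀ M j, n ≤ j → g.natDegree < j + M → ∃ k : ℕ, g.coeff j * a ^ k ∈ Ideal.span {b} := by
  intro M
  induction M with
  | zero =>
    intro j _ hj
    exact ⟨0, by rw [Polynomial.coeff_eq_zero_of_natDegree_lt (by omega)]; simp⟩
  | succ M ih =>
    intro j hnj hdeg
    by_cases hd : g.natDegree < j
    · exact ⟨0, by rw [Polynomial.coeff_eq_zero_of_natDegree_lt hd]; simp⟩
    · obtain ⟨k, hk⟩ := ih (j + 1) (by omega) (by omega)
      obtain ⟨r, hr⟩ := Ideal.mem_span_singleton.1 hk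
      have hrel := hcoef (j + 1) (by omega)
      have hexp : g * (1 + C a * X) + h * C b = g + C a * (g * X) + h * C b := by ring
      rw [hexp] at hrel
      simp only [coeff_add, coeff_C_mul, coeff_mul_X, coeff_mul_C] at hrel
      refine ⟨k + 1, Ideal.mem_span_singleton.2 ⟨-r - h.coeff (j + 1) * a ^ k, ?_⟩⟩
      linear_combination (a ^ k) * hrel - hr

/-- Every element of `[b : a^∞]` is, as a constant polynomial, in `⟨1+aX, b⟩`. -/
lemma constant_mem (a b x : R) (hx : ∃ m : ℕ, x * a ^ m ∈ Ideal.span {b}) :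
    (C x : R[X]) ∈ Ideal.span {1 + C a * X, C b} := by
  obtain ⟨m, hm⟩ := hx
  obtain ⟨r, hr⟩ := Ideal.mem_span_singleton.1 hm
  have hgeo : (∑ k ∈ Finset.range m, (-(C a * X) : R[X]) ^ k) * (1 + C a * X)
      = 1 - (-(C a * X)) ^ m := by
    have h := geom_sum_mul (-(C a * X) : R[X]) m
    linear_combination -h
  have hrC : (C (x * a ^ m) : R[X]) = C b * C r := by rw [hr, map_mul]
  have key : (C x : R[X]) = (C x * ∑ k ∈ Finset.range m, (-(C a * X)) ^ k) * (1 + C a * X)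
      + ((-1 : R[X]) ^ m * C r * X ^ m) * C b := by
    simp only [map_mul, map_pow] at hrC
    linear_combination (-(C x) : R[X]) * hgeo + ((-1 : R[X]) ^ m * X ^ m) * hrC
  rw [key]
  exact Ideal.add_mem _
    (Ideal.mul_mem_left _ _ (Ideal.subset_span (by simp)))
    (Ideal.mul_mem_left _ _ (Ideal.subset_span (by simp)))

/-- Monomials with coefficient in `[b : a^∞]` belong to `LT(⟨1+aX, b⟩)`. -/
lemma mono_mem_lt (a b x : R) (i : ℕ) (hx : ∃ m : ℕ, x * a ^ m ∈ Ideal.span {b}) :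
    (C x * X ^ i : R[X]) ∈ ltIdeal (Ideal.span {1 + C a * X, C b}) := by
  by_cases hx0 : x = 0
  · simp [hx0]
  · refine Ideal.subset_span ⟨C x * X ^ i, ?_, ?_, ?_⟩
    · have := constant_mem a b x hx
      rw [mul_comm (C x) (X ^ i)]
      exact Ideal.mul_mem_left _ (X ^ i) this
    · intro h
      have : (C x * X ^ i : R[X]).coeff i = 0 := by rw [h]; simp
      rw [coeff_C_mul, coeff_X_pow, if_pos rfl, mul_one] at this
      exact hx0 this
    · rw [leadingCoeff_C_mul_X_pow, natDegree_C_mul_X_pow i x hx0]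

end Aux

/-- For `a, b ∈ R`, `LT(⟨1 + aX, b⟩) = [b : a^∞][X] + ⟨aX⟩`, where
`[b : a^∞] = {x ∈ R ∣ ∃ m, x·a^m ∈ ⟨b⟩}` and `[b : a^∞][X]` is the ideal of `R[X]` of all
polynomials whose coefficients all lie in `[b : a^∞]`. -/
theorem stmt18 {R : Type*} [CommRing R] (a b : R) :
    ltIdeal (Ideal.span {1 + Polynomial.C a * Polynomial.X, Polynomial.C b}) =
      Ideal.span ({p : Polynomial R |
          ∀ i : ℕ, p.coeff i ∈ {x : R | ∃ m : ℕ, x * a ^ m ∈ Ideal.span {b}}} ∪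
        {Polynomial.C a * Polynomial.X}) := by
  apply le_antisymm
  · -- `LT(I) ⊆ RHS`
    apply Ideal.span_le.2
    rintro p ⟨f, hfI, hf0, rfl⟩
    obtain ⟨g, h, hgh⟩ := Ideal.mem_span_pair.1 hfI
    obtain ⟨n, hn⟩ : ∃ n, f.natDegree = n := ⟨_, rfl⟩
    have hcoef : ∀ i, n < i → (g * (1 + C a * X) + h * C b).coeff i = 0 := by
      intro i hi
      rw [hgh]
      exact coeff_eq_zero_of_natDegree_lt (by omega)
    obtain ⟨k, hk⟩ := aux_pow a b g h n hcoef (g.natDegree + 1) n le_rfl (by omega)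
    have hlc : f.leadingCoeff = g.coeff n + a * (g * X).coeff n + h.coeff n * b := by
      have hc := congrArg (fun q => q.coeff n) hgh
      rw [leadingCoeff, hn, ← hc]
      have hexp : g * (1 + C a * X) + h * C b = g + C a * (g * X) + h * C b := by ring
      rw [hexp]
      simp [coeff_add, coeff_C_mul, coeff_mul_C]
    have hSsum : ∃ m : ℕ, (g.coeff n + h.coeff n * b) * a ^ m ∈ Ideal.span {b} := by
      refine ⟨k, ?_⟩
      have h2 : h.coeff n * b * a ^ k ∈ Ideal.span {b} :=
        Ideal.mem_span_singleton.2 ⟨h.coeff n * a ^ k, by ring⟩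
      have := Ideal.add_mem _ hk h2
      convert this using 1
      ring
    have hmono : ∀ (s : R) (m : ℕ), (∃ q : ℕ, s * a ^ q ∈ Ideal.span {b}) →
        (C s * X ^ m : R[X]) ∈ {p : Polynomial R |
          ∀ i : ℕ, p.coeff i ∈ {x : R | ∃ q : ℕ, x * a ^ q ∈ Ideal.span {b}}} := by
      intro s m hs i
      rw [Set.mem_setOf_eq, coeff_C_mul, coeff_X_pow]
      split
      · simpa using hs
      · exact ⟨0, by simp⟩
    rw [hn]
    cases n with
    | zero =>
      have hx0 : (g * X).coeff 0 = 0 := by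
        rw [mul_coeff_zero, coeff_X_zero, mul_zero]
      have hlc0 : f.leadingCoeff = g.coeff 0 + h.coeff 0 * b := by
        rw [hlc, hx0]; ring
      exact Ideal.subset_span (Or.inl (hmono f.leadingCoeff 0 (hlc0 ▸ hSsum)))
    | succ m =>
      have hxm : (g * X).coeff (m + 1) = g.coeff m := coeff_mul_X g m
      have hsplit : (C f.leadingCoeff * X ^ (m + 1) : R[X]) =
          C (g.coeff (m + 1) + h.coeff (m + 1) * b) * X ^ (m + 1) +
            (C (g.coeff m) * X ^ m) * (C a * X) := by
        rw [hlc, hxm]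
        simp only [map_add, map_mul]
        ring
      rw [hsplit]
      refine Ideal.add_mem _ (Ideal.subset_span (Or.inl (hmono _ _ hSsum))) ?_
      exact Ideal.mul_mem_left _ _ (Ideal.subset_span (Or.inr rfl))
  · -- `RHS ⊆ LT(I)`
    apply Ideal.span_le.2
    rintro p (hp | hp)
    · rw [← Polynomial.sum_C_mul_X_pow_eq p, Polynomial.sum_def]
      exact Submodule.sum_mem _ fun i _ => mono_mem_lt a b _ i (hp i)
    · rw [Set.mem_singleton_iff] at hp
      subst hp
      by_cases ha : a = 0
      · simp only [ha, map_zero, zero_mul]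
        exact Ideal.zero_mem _
      · have h1 : (1 + C a * X : R[X]) = C a * X + C 1 := by rw [map_one]; ring
        refine Ideal.subset_span ⟨1 + C a * X, Ideal.subset_span (Set.mem_insert _ _), ?_, ?_⟩
        · intro h0
          apply ha
          have := congrArg (fun q => q.coeff 1) h0
          simpa [coeff_one] using this
        · rw [h1, natDegree_linear ha, leadingCoeff_linear ha, pow_one]
end

section
/- Let R be a commutative ring, let ≺ be a monomial order on A := R[X_1,…,X_n], let k ∈ ℕ_{>0} and f_1,…,f_p ∈ A, and set f̃_i := f_i(X_1^k,…,X_n^k). If there exists P ∈ A[Y_1,…,Y_p] with P(f̃_1,…,f̃_p) = 0 whose trailing coefficient TC_lex(P) is ≺-monic (respectively, equal to 1), then there exists Q ∈ A[Y_1,…,Y_p] with Q(f_1,…,f_p) = 0 whose trailing coefficient TC_lex(Q) is ≺-monic (respectively, equal to 1). -/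
open MvPolynomial

section Aux
variable {R : Type*} [CommRing R] {n : ℕ}


variable {R : Type*} [CommRing R] {n : ℕ}

noncomputable def divk (k : ℕ) (d : Fin n →₀ ℕ) : Fin n →₀ ℕ :=
  d.mapRange (· / k) (Nat.zero_div k)

@[simp] theorem divk_apply (k : ℕ) (d : Fin n →₀ ℕ) (j : Fin n) :
    divk k d j = d j / k := rfl

noncomputable def extHom (k : ℕ) (r : Fin n →₀ ℕ) :
    MvPolynomial (Fin n) R →+ MvPolynomial (Fin n) R :=
  (Finsupp.liftAddHom fun d =>
    if (∀ j, d j % k = r j) then ((monomial (R := R) (divk k d)).toAddMonoidHom) else 0).comp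
    (AddMonoidAlgebra.coeffAddEquiv (R := R) (M := Fin n →₀ ℕ)).toAddMonoidHom

theorem extHom_monomial (k : ℕ) (r : Fin n →₀ ℕ) (d : Fin n →₀ ℕ) (c : R) :
    extHom k r (monomial d c) =
      if (∀ j, d j % k = r j) then monomial (divk k d) c else 0 := by
  rw [extHom, AddMonoidHom.comp_apply]
  erw [show AddMonoidAlgebra.coeffAddEquiv (monomial d c) = Finsupp.single d c from rfl,
    Finsupp.liftAddHom_apply_single]
  split <;> simp


theorem extHom_mul_pow_X (k : ℕ) (hk : 0 < k) (r : Fin n →₀ ℕ)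
    (a : MvPolynomial (Fin n) R) (j : Fin n) :
    extHom k r (a * X j ^ k) = extHom k r a * X j := by
  induction a using MvPolynomial.induction_on' with
  | add p q hp hq => rw [add_mul, map_add, map_add, hp, hq, add_mul]
  | monomial d c =>
    have hX : (X j : MvPolynomial (Fin n) R) ^ k = monomial (Finsupp.single j k) 1 := by
      rw [X, monomial_pow, one_pow, Finsupp.smul_single, smul_eq_mul, mul_one]
    rw [hX, monomial_mul, mul_one, extHom_monomial, extHom_monomial]
    have hcond : (∀ i, (d + Finsupp.single j k) i % k = r i) ↔ (∀ i, d i % k = r i) := by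
      apply forall_congr'
      intro i
      rcases eq_or_ne i j with h | h
      · subst h; simp [Nat.add_mul_mod_self_right]
      · simp [Finsupp.single_apply, Ne.symm h]
    have hdiv : divk k (d + Finsupp.single j k) = divk k d + Finsupp.single j 1 := by
      ext i
      rcases eq_or_ne i j with h | h
      · subst h; simp [Nat.add_div_right _ hk]
      · simp [Finsupp.single_apply, Ne.symm h]
    rw [hdiv]
    by_cases h : ∀ i, d i % k = r i
    · rw [if_pos (hcond.mpr h), if_pos h, X, monomial_mul, mul_one]
    · rw [if_neg (fun hh => h (hcond.mp hh)), if_neg h, zero_mul]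

theorem extHom_mul_C (k : ℕ) (r : Fin n →₀ ℕ)
    (a : MvPolynomial (Fin n) R) (c' : R) :
    extHom k r (a * C c') = extHom k r a * C c' := by
  induction a using MvPolynomial.induction_on' with
  | add p q hp hq => rw [add_mul, map_add, map_add, hp, hq, add_mul]
  | monomial d c =>
    rw [C_apply, monomial_mul, add_zero, extHom_monomial, extHom_monomial]
    split
    · rw [monomial_mul, add_zero]
    · rw [zero_mul]

theorem extHom_mul_phi (k : ℕ) (hk : 0 < k) (r : Fin n →₀ ℕ)
    (b a : MvPolynomial (Fin n) R) :
    extHom k r (a * (aeval (fun j => (X j : MvPolynomial (Fin n) R) ^ k)) b) =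
      extHom k r a * b := by
  induction b using MvPolynomial.induction_on generalizing a with
  | C c => rw [aeval_C, algebraMap_eq, extHom_mul_C]
  | add p q hp hq => rw [map_add, mul_add, map_add, hp, hq, mul_add]
  | mul_X p j hp =>
    have hsub : (aeval (fun j => (X j : MvPolynomial (Fin n) R) ^ k)) (p * X j)
        = (aeval (fun j => (X j : MvPolynomial (Fin n) R) ^ k)) p * X j ^ k := by
      rw [map_mul, aeval_X]
    rw [hsub, ← mul_assoc, extHom_mul_pow_X k hk, hp, mul_assoc]

theorem coeff_extHom (k : ℕ) (hk : 0 < k) (r : Fin n →₀ ℕ) (hr : ∀ j, r j < k)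
    (a : MvPolynomial (Fin n) R) (q : Fin n →₀ ℕ) :
    coeff q (extHom k r a) = coeff (k • q + r) a := by
  induction a using MvPolynomial.induction_on' with
  | add p p' hp hp' => rw [map_add, coeff_add, coeff_add, hp, hp']
  | monomial d c =>
    rw [extHom_monomial, coeff_monomial]
    by_cases h : ∀ j, d j % k = r j
    · rw [if_pos h, coeff_monomial]
      congr 1
      simp only [eq_iff_iff]
      constructor
      · rintro rfl
        ext j
        simp only [Finsupp.add_apply, Finsupp.smul_apply, divk_apply, smul_eq_mul]
        rw [← h j, Nat.div_add_mod]
      · rintro rfl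
        ext j
        simp only [Finsupp.add_apply, Finsupp.smul_apply, divk_apply, smul_eq_mul]
        rw [Nat.mul_add_div hk, Nat.div_eq_of_lt (hr j), add_zero]
    · rw [if_neg h, if_neg, coeff_zero]
      rintro rfl
      apply h
      intro j
      simp only [Finsupp.add_apply, Finsupp.smul_apply, smul_eq_mul]
      rw [Nat.mul_add_mod, Nat.mod_eq_of_lt (hr j)]

theorem key_lemma_s19 {p k : ℕ} (hk : 0 < k) (f : Fin p → MvPolynomial (Fin n) R)
    (P : MvPolynomial (Fin p) (MvPolynomial (Fin n) R))
    (hP : MvPolynomial.aeval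
        (fun i => MvPolynomial.aeval (fun j => (MvPolynomial.X j : MvPolynomial (Fin n) R) ^ k)
          (f i)) P = 0) (r : Fin n →₀ ℕ) :
    ∃ Q : MvPolynomial (Fin p) (MvPolynomial (Fin n) R),
      (∀ e, coeff e Q = extHom k r (coeff e P)) ∧ Q.support ⊆ P.support ∧
        MvPolynomial.aeval f Q = 0 := by
  classical
  set φ : MvPolynomial (Fin n) R →ₐ[R] MvPolynomial (Fin n) R :=
    aeval (fun j => (X j : MvPolynomial (Fin n) R) ^ k) with hφ
  set Q : MvPolynomial (Fin p) (MvPolynomial (Fin n) R) :=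
    ∑ e ∈ P.support, monomial e (extHom k r (coeff e P)) with hQ
  have hQcoeff : ∀ e, coeff e Q = extHom k r (coeff e P) := by
    intro e
    rw [hQ, coeff_sum]
    simp only [coeff_monomial]
    rw [Finset.sum_ite_eq' P.support e (fun e => extHom k r (coeff e P))]
    split
    · rfl
    · rw [MvPolynomial.notMem_support_iff.mp (by assumption), map_zero]
  refine ⟨Q, hQcoeff, ?_, ?_⟩
  · intro e he
    rw [mem_support_iff] at he ⊢
    intro h0
    exact he (by rw [hQcoeff e, h0, map_zero])
  · have haQ : aeval f Q =
        ∑ e ∈ P.support, extHom k r (coeff e P) * (e.prod fun j m => f j ^ m) := by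
      rw [hQ, map_sum]
      refine Finset.sum_congr rfl fun e _ => ?_
      rw [aeval_monomial]
      simp
    have hprod : ∀ e : Fin p →₀ ℕ,
        (e.prod fun j m => (φ (f j)) ^ m) = φ (e.prod fun j m => f j ^ m) := by
      intro e
      rw [map_finsuppProd]
      simp
    have haP : (0 : MvPolynomial (Fin n) R) =
        ∑ e ∈ P.support, coeff e P * φ (e.prod fun j m => f j ^ m) := by
      rw [← hP]
      conv_lhs => rw [P.as_sum, map_sum]
      refine Finset.sum_congr rfl fun e _ => ?_
      rw [aeval_monomial, ← hprod]
      simp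
    rw [haQ]
    have := congrArg (extHom k r) haP
    rw [map_zero, map_sum] at this
    rw [this]
    exact Finset.sum_congr rfl fun e _ =>
      (extHom_mul_phi k hk r (e.prod fun j m => f j ^ m) (coeff e P)).symm

end Aux


/-- `f` is `≺`-monic w.r.t. the monomial order `m`: its leading coefficient is `1`. -/
def MIsMonicWrt {R : Type*} [CommRing R] {n : ℕ} (m : MonomialOrder (Fin n))
    (f : MvPolynomial (Fin n) R) : Prop :=
  ∃ e, MIsLeadOf m f e ∧ MvPolynomial.coeff e f = 1

/-- Comparison of exponent vectors determined by an integer matrix `M`: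
`e ≺ f` iff `M·e <_lex M·f` (lexicographic order on integer vectors). -/
def matLt {p : ℕ} (M : Matrix (Fin p) (Fin p) ℤ) (e f : Fin p →₀ ℕ) : Prop :=
  toLex (fun i => ∑ j, M i j * (e j : ℤ)) < toLex (fun i => ∑ j, M i j * (f j : ℤ))

/-- The matrix defining the lexicographic monomial order with `Y 0 < Y 1 < ⋯ < Y (p-1)`. -/
def lexMat (p : ℕ) : Matrix (Fin p) (Fin p) ℤ := fun i j => if j = i.rev then 1 else 0

/-- `c` is the trailing coefficient `TC_lex(P)` of `P ∈ A[Y_1,…,Y_p]`: the coefficient of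
the smallest monomial of `P` w.r.t. the lexicographic order with `Y_1 < ⋯ < Y_p`. -/
def IsTrailCoeffOf {A : Type*} [CommRing A] {p : ℕ} (P : MvPolynomial (Fin p) A)
    (c : A) : Prop :=
  ∃ e ∈ P.support, (∀ d ∈ P.support, d ≠ e → matLt (lexMat p) e d) ∧
    c = MvPolynomial.coeff e P

/-- If `P ∈ A[Y_1,…,Y_p]` (with `A = R[X_1,…,X_n]`) kills `(f̃_1,…,f̃_p)`, where
`f̃_i = f_i(X_1^k,…,X_n^k)`, and its trailing coefficient `TC_lex(P)` is `≺`-monic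
(resp. equal to `1`), then some `Q ∈ A[Y_1,…,Y_p]` kills `(f_1,…,f_p)` and its trailing
coefficient `TC_lex(Q)` is `≺`-monic (resp. equal to `1`). -/
theorem stmt19 {R : Type*} [CommRing R] {n : ℕ} (hn : 1 ≤ n) (m : MonomialOrder (Fin n))
    {p k : ℕ} (hk : 0 < k) (f : Fin p → MvPolynomial (Fin n) R) :
    ((∃ P : MvPolynomial (Fin p) (MvPolynomial (Fin n) R),
        (∃ c, IsTrailCoeffOf P c ∧ MIsMonicWrt m c) ∧
        MvPolynomial.aeval
          (fun i => MvPolynomial.aeval (fun j => (MvPolynomial.X j : MvPolynomial (Fin n) R) ^ k)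
            (f i)) P = 0) →
      ∃ Q : MvPolynomial (Fin p) (MvPolynomial (Fin n) R),
        (∃ c, IsTrailCoeffOf Q c ∧ MIsMonicWrt m c) ∧
        MvPolynomial.aeval f Q = 0) ∧
    ((∃ P : MvPolynomial (Fin p) (MvPolynomial (Fin n) R),
        IsTrailCoeffOf P 1 ∧
        MvPolynomial.aeval
          (fun i => MvPolynomial.aeval (fun j => (MvPolynomial.X j : MvPolynomial (Fin n) R) ^ k)
            (f i)) P = 0) →
      ∃ Q : MvPolynomial (Fin p) (MvPolynomial (Fin n) R),
        IsTrailCoeffOf Q 1 ∧ MvPolynomial.aeval f Q = 0) := by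
  classical
  constructor
  · rintro ⟨P, ⟨c, ⟨e₀, he₀P, htrail, hc⟩, d₀, ⟨hd₀supp, hd₀lead⟩, hd₀coeff⟩, hP0⟩
    set r : Fin n →₀ ℕ := d₀.mapRange (· % k) (Nat.zero_mod k) with hrdef
    have hr : ∀ j, r j < k := fun j => by
      rw [hrdef, Finsupp.mapRange_apply]; exact Nat.mod_lt _ hk
    obtain ⟨Q, hQcoeff, hQsupp, hQ0⟩ := key_lemma_s19 hk f P hP0 r
    have hrec : k • divk k d₀ + r = d₀ := by
      ext j
      simp only [Finsupp.add_apply, Finsupp.smul_apply, divk_apply, smul_eq_mul, hrdef,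
        Finsupp.mapRange_apply]
      exact Nat.div_add_mod _ _
    have hcoeff1 : MvPolynomial.coeff (divk k d₀) (extHom k r c) = 1 := by
      rw [coeff_extHom k hk r hr, hrec, hd₀coeff]
    have hR : (1 : R) ≠ 0 := by
      intro h
      rw [MvPolynomial.mem_support_iff, hd₀coeff] at hd₀supp
      exact hd₀supp h
    have hcne : extHom k r c ≠ 0 := by
      intro h; rw [h, MvPolynomial.coeff_zero] at hcoeff1; exact hR hcoeff1.symm
    have he₀Q : e₀ ∈ Q.support := by
      rw [MvPolynomial.mem_support_iff, hQcoeff, ← hc]; exact hcne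
    refine ⟨Q, ⟨extHom k r c,
      ⟨e₀, he₀Q, fun d hd hne => htrail d (hQsupp hd) hne, by rw [hQcoeff, ← hc]⟩,
      ?_⟩, hQ0⟩
    refine ⟨divk k d₀, ⟨?_, ?_⟩, hcoeff1⟩
    · rw [MvPolynomial.mem_support_iff, hcoeff1]; exact hR
    · intro d' hd' hne
      have h1 : MvPolynomial.coeff (k • d' + r) c ≠ 0 := by
        rw [← coeff_extHom k hk r hr]
        exact MvPolynomial.mem_support_iff.mp hd'
      have hne2 : k • d' + r ≠ d₀ := by
        intro h
        apply hne
        have hdd : divk k (k • d' + r) = divk k d₀ := by rw [h]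
        rw [← hdd]
        ext j
        simp only [divk_apply, Finsupp.add_apply, Finsupp.smul_apply, smul_eq_mul]
        rw [Nat.mul_add_div hk, Nat.div_eq_of_lt (hr j), add_zero]
      have hlt := hd₀lead _ (MvPolynomial.mem_support_iff.mpr h1) hne2
      rw [← hrec, map_add, map_add] at hlt
      have hlt2 := lt_of_add_lt_add_right hlt
      rw [map_nsmul, map_nsmul] at hlt2
      by_contra hle
      push_neg at hle
      exact absurd hlt2 (not_lt.mpr (nsmul_le_nsmul_right hle k))
  · rintro ⟨P, ⟨e₀, he₀P, htrail, hc⟩, hP0⟩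
    obtain ⟨Q, hQcoeff, hQsupp, hQ0⟩ := key_lemma_s19 hk f P hP0 0
    have hone : extHom k (0 : Fin n →₀ ℕ) (1 : MvPolynomial (Fin n) R) = 1 := by
      rw [← MvPolynomial.C_1, MvPolynomial.C_apply, extHom_monomial, if_pos]
      · rw [show divk k (0 : Fin n →₀ ℕ) = 0 from by ext j; simp,
          MvPolynomial.monomial_zero', MvPolynomial.C_1]
      · intro j; simp
    have hA : (1 : MvPolynomial (Fin n) R) ≠ 0 := fun h =>
      MvPolynomial.mem_support_iff.mp he₀P (by rw [← hc]; exact h)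
    have hQe₀ : MvPolynomial.coeff e₀ Q = 1 := by rw [hQcoeff, ← hc, hone]
    exact ⟨Q, ⟨e₀, MvPolynomial.mem_support_iff.mpr (by rw [hQe₀]; exact hA),
      fun d hd hne => htrail d (hQsupp hd) hne, hQe₀.symm⟩, hQ0⟩
end
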